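/- (Convergence of sGS-APG.) Let A : S^n → R^m be a surjective linear map, Z ∈ S^n, b ∈ R^m, and f(W, ξ) = ½‖W + A*ξ + Z‖² − ⟨b, ξ⟩. Assume (W*, ξ*) minimizes f over S^n_+ × R^m. Given W^0 ∈ S^n_+, set W̃^1 = W^0, t_1 = 1, and for k ≥ 1 define: ξ̃^k = (AA*)^{−1}(b − A(Z) − A(W̃^k)), W^k = Π_{S^n_+}(−A*ξ̃^k − Z), ξ^k = (AA*)^{−1}(b − A(Z) − A(W^k)), t_{k+1} = (1 + √(1 + 4 t_k²))/2, and W̃^{k+1} = W^k + ((t_k − 1)/t_{k+1})(W^k − W^{k−1}). Then there exists a constant c ≥ 0 such that for all k ≥ 1: 0 ≤ f(W^k, ξ^k) − f(W*, ξ*) ≤ c/(k+1)². -/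

import Mathlib

set_option autoImplicit false

open Matrix Finset Filter
open scoped RealInnerProductSpace

noncomputable section

/-- The trace inner product `⟨X, Y⟩ = trace (Xᵀ * Y)` on real `n × n` matrices. -/
def mInner {n : ℕ} (X Y : Matrix (Fin n) (Fin n) ℝ) : ℝ := (Xᵀ * Y).trace

/-- The Frobenius norm induced by the trace inner product. -/
def mNorm {n : ℕ} (X : Matrix (Fin n) (Fin n) ℝ) : ℝ := Real.sqrt (mInner X X)

/-- `ℝ^m` with the Euclidean inner product. -/
abbrev Vec (m : ℕ) := EuclideanSpace ℝ (Fin m)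

/-- `P` is the (unique) nearest positive semidefinite matrix to `Z` in the Frobenius norm,
i.e. the projection of `Z` onto the PSD cone. -/
def IsProjPSD {n : ℕ} (Z P : Matrix (Fin n) (Fin n) ℝ) : Prop :=
  P.PosSemidef ∧
    ∀ Y : Matrix (Fin n) (Fin n) ℝ, Y.PosSemidef → mNorm (P - Z) ≤ mNorm (Y - Z)

/-- The objective of the dual projection problem:
`f(W, ξ) = ½ ‖W + A*ξ + Z‖² − ⟨b, ξ⟩`. -/
def fobj {n m : ℕ} (Aadj : Vec m →ₗ[ℝ] Matrix (Fin n) (Fin n) ℝ)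
    (Z : Matrix (Fin n) (Fin n) ℝ) (b : Vec m)
    (W : Matrix (Fin n) (Fin n) ℝ) (ξ : Vec m) : ℝ :=
  (1 / 2) * mNorm (W + Aadj ξ + Z) ^ 2 - ⟪b, ξ⟫

/-! Minimizing `f` over `ξ` in closed form, `ξ(W) = (AA*)⁻¹ (b − A Z − A W)`, leaves the reduced
objective `h(W) = f(W, ξ(W))`: a convex quadratic with gradient `W + A* ξ(W) + Z` and Hessian the
orthogonal projection onto `ker A`, hence `1`-smooth. Since `W̃ − ∇h(W̃) = −A* ξ(W̃) − Z`,
sGS-APG is FISTA with unit step for `h` on the PSD cone. Each projected gradient step satisfies the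
three-point inequality `h(W^k) − h(V) ≤ ½‖W̃^k − V‖² − ½‖W^k − V‖²` for PSD `V`, which makes the
Beck–Teboulle energy `t_k² (h(W^k) − h(W*)) + ½‖t_k W^k − (t_k − 1) W^{k−1} − W*‖²` nonincreasing.
With `t_k ≥ (k + 1)/2` this gives the rate with `c = 2‖W^0 − W*‖²`, because `f(W^k, ξ^k) = h(W^k)`
and `h(W*) ≤ f(W*, ξ*)`. -/

section ProjectedGradient

variable {E : Type*} [NormedAddCommGroup E] [InnerProductSpace ℝ E]

theorem real_inner_le_zero_of_forall_norm_sub_le {K : Set E} (hK : Convex ℝ K) {u v : E}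
    (hv : v ∈ K) (hmin : ∀ w ∈ K, ‖u - v‖ ≤ ‖u - w‖) : ∀ w ∈ K, ⟪u - v, w - v⟫ ≤ 0 := by
  have : Nonempty K := ⟨⟨v, hv⟩⟩
  refine (norm_eq_iInf_iff_real_inner_le_zero hK hv).1 (le_antisymm ?_ ?_)
  · exact le_ciInf fun w ↦ hmin w w.2
  · exact ciInf_le ⟨0, Set.forall_mem_range.2 fun w : K ↦ norm_nonneg (u - w)⟩ ⟨v, hv⟩

/-- `hx` is the variational inequality characterizing `x = Π_C (y - g)`, tested at `z ∈ C`. -/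
theorem three_point_of_projected_gradient_step {f : E → ℝ} {g x y z : E}
    (hx : ⟪y - g - x, z - x⟫ ≤ 0)
    (hupper : f x ≤ f y + ⟪g, x - y⟫ + ‖x - y‖ ^ 2 / 2)
    (hlower : f y + ⟪g, z - y⟫ ≤ f z) :
    f x - f z ≤ ‖y - z‖ ^ 2 / 2 - ‖x - z‖ ^ 2 / 2 := by
  have hsplit : ‖y - z‖ ^ 2 = ‖y - x‖ ^ 2 + 2 * ⟪y - x, x - z⟫ + ‖x - z‖ ^ 2 := by
    rw [← norm_add_sq_real, sub_add_sub_cancel]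
  have hg : ⟪g, z - x⟫ = ⟪g, z - y⟫ - ⟪g, x - y⟫ := by
    rw [← inner_sub_right, sub_sub_sub_cancel_right]
  have hyx : ⟪y - x, z - x⟫ = -⟪y - x, x - z⟫ := by
    rw [← inner_neg_right, neg_sub]
  rw [sub_right_comm, inner_sub_left, hg, hyx] at hx
  rw [norm_sub_rev x y] at hupper
  linarith

theorem fista_sq_sub_self (τ : ℝ) :
    ((1 + √(1 + 4 * τ ^ 2)) / 2) ^ 2 - (1 + √(1 + 4 * τ ^ 2)) / 2 = τ ^ 2 := by
  linear_combination Real.sq_sqrt (by positivity : (0 : ℝ) ≤ 1 + 4 * τ ^ 2) / 4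

theorem add_half_le_fista_next (τ : ℝ) : τ + 1 / 2 ≤ (1 + √(1 + 4 * τ ^ 2)) / 2 := by
  have : 2 * τ ≤ √(1 + 4 * τ ^ 2) := Real.le_sqrt_of_sq_le (by nlinarith)
  linarith

theorem fista_t_lower_bound {t : ℕ → ℝ} (ht1 : t 1 = 1)
    (ht : ∀ k, 1 ≤ k → t (k + 1) = (1 + √(1 + 4 * t k ^ 2)) / 2) :
    ∀ k : ℕ, 1 ≤ k → ((k : ℝ) + 1) / 2 ≤ t k := by
  intro k hk
  induction k, hk using Nat.le_induction with
  | base => norm_num [ht1]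
  | succ k hk ih =>
    rw [ht k hk]
    push_cast
    linarith [add_half_le_fista_next (t k)]

theorem fista_norm_sq_identity (T : ℝ) (v a c : E) :
    T * (T - 1) * ‖v - a‖ ^ 2 + T * ‖v - c‖ ^ 2 =
      ‖T • v - (T - 1) • a - c‖ ^ 2 + (T - 1) * ‖a - c‖ ^ 2 := by
  have h1 : v - a = (v - c) - (a - c) := by abel
  have h2 : T • v - (T - 1) • a - c = T • (v - c) - (T - 1) • (a - c) := by module
  rw [h1, h2, norm_sub_sq_real (v - c), norm_sub_sq_real (T • (v - c)), norm_smul, norm_smul,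
    real_inner_smul_left, real_inner_smul_right, Real.norm_eq_abs, Real.norm_eq_abs, mul_pow,
    mul_pow, sq_abs, sq_abs]
  ring

/-- One step of the Beck–Teboulle Lyapunov argument: `τ` and `T` are consecutive step sizes, `y` is
the extrapolated point built from `xPrev` and `xk`, and `xNext` is the step taken from `y`. -/
theorem fista_energy_step {f : E → ℝ} {xPrev xk y xNext xs : E} {τ T : ℝ} (hT : 1 ≤ T)
    (hrec : T ^ 2 - T = τ ^ 2) (hmom : T • y - (T - 1) • xk = τ • xk - (τ - 1) • xPrev)
    (hxk : f xNext - f xk ≤ ‖y - xk‖ ^ 2 / 2 - ‖xNext - xk‖ ^ 2 / 2)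
    (hxs : f xNext - f xs ≤ ‖y - xs‖ ^ 2 / 2 - ‖xNext - xs‖ ^ 2 / 2) :
    T ^ 2 * (f xNext - f xs) + ‖T • xNext - (T - 1) • xk - xs‖ ^ 2 / 2 ≤
      τ ^ 2 * (f xk - f xs) + ‖τ • xk - (τ - 1) • xPrev - xs‖ ^ 2 / 2 := by
  have hxk' := mul_le_mul_of_nonneg_left hxk (by nlinarith : 0 ≤ T * (T - 1))
  have hxs' := mul_le_mul_of_nonneg_left hxs (by linarith : 0 ≤ T)
  have hy := fista_norm_sq_identity T y xk xs
  have hx := fista_norm_sq_identity T xNext xk xs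
  rw [hmom] at hy
  have hτ : τ ^ 2 * (f xk - f xs) = (T ^ 2 - T) * (f xk - f xs) := by rw [hrec]
  nlinarith

theorem fista_energy_le {f : E → ℝ} {C : Set E} {x y : ℕ → E} {t : ℕ → ℝ} {xs : E}
    (hxs : xs ∈ C) (hxC : ∀ k, 1 ≤ k → x k ∈ C)
    (hstep : ∀ k, 1 ≤ k → ∀ z ∈ C, f (x k) - f z ≤ ‖y k - z‖ ^ 2 / 2 - ‖x k - z‖ ^ 2 / 2)
    (hy1 : y 1 = x 0) (ht1 : t 1 = 1)
    (ht : ∀ k, 1 ≤ k → t (k + 1) = (1 + √(1 + 4 * t k ^ 2)) / 2)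
    (hy : ∀ k, 1 ≤ k → y (k + 1) = x k + ((t k - 1) / t (k + 1)) • (x k - x (k - 1)))
    (k : ℕ) (hk : 1 ≤ k) :
    t k ^ 2 * (f (x k) - f xs) + ‖t k • x k - (t k - 1) • x (k - 1) - xs‖ ^ 2 / 2 ≤
      ‖x 0 - xs‖ ^ 2 / 2 := by
  induction k, hk using Nat.le_induction with
  | base =>
    have h1 := hstep 1 le_rfl xs hxs
    simp only [ht1, hy1, one_pow, one_mul, one_smul, sub_self, zero_smul, sub_zero] at h1 ⊢
    linarith
  | succ k hk ih =>
    have hT : 1 ≤ t (k + 1) := by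
      have := fista_t_lower_bound ht1 ht (k + 1) (by omega)
      push_cast at this
      linarith [(Nat.one_le_cast (α := ℝ)).2 hk]
    have hmom : t (k + 1) • y (k + 1) - (t (k + 1) - 1) • x k =
        t k • x k - (t k - 1) • x (k - 1) := by
      rw [hy k hk, smul_add, smul_smul, mul_div_cancel₀ _ (by positivity)]
      module
    rw [Nat.add_sub_cancel]
    refine (fista_energy_step hT ?_ hmom (hstep _ (by omega) _ (hxC k hk))
      (hstep _ (by omega) _ hxs)).trans ih
    rw [ht k hk, fista_sq_sub_self]

theorem fista_rate {f : E → ℝ} {C : Set E} {x y : ℕ → E} {t : ℕ → ℝ} {xs : E}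
    (hxs : xs ∈ C) (hmin : IsMinOn f C xs) (hxC : ∀ k, 1 ≤ k → x k ∈ C)
    (hstep : ∀ k, 1 ≤ k → ∀ z ∈ C, f (x k) - f z ≤ ‖y k - z‖ ^ 2 / 2 - ‖x k - z‖ ^ 2 / 2)
    (hy1 : y 1 = x 0) (ht1 : t 1 = 1)
    (ht : ∀ k, 1 ≤ k → t (k + 1) = (1 + √(1 + 4 * t k ^ 2)) / 2)
    (hy : ∀ k, 1 ≤ k → y (k + 1) = x k + ((t k - 1) / t (k + 1)) • (x k - x (k - 1)))
    (k : ℕ) (hk : 1 ≤ k) :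
    f (x k) - f xs ≤ 2 * ‖x 0 - xs‖ ^ 2 / ((k : ℝ) + 1) ^ 2 := by
  have henergy := fista_energy_le hxs hxC hstep hy1 ht1 ht hy k hk
  have hgap : 0 ≤ f (x k) - f xs := sub_nonneg.2 (hmin (hxC k hk))
  have htk := fista_t_lower_bound ht1 ht k hk
  have hk0 : (0 : ℝ) < (k : ℝ) + 1 := by positivity
  rw [le_div_iff₀ (by positivity)]
  have : ((k : ℝ) + 1) ^ 2 / 4 ≤ t k ^ 2 := by nlinarith
  nlinarith [norm_nonneg (t k • x k - (t k - 1) • x (k - 1) - xs)]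

end ProjectedGradient

section DualObjective

variable {E F : Type*} [NormedAddCommGroup E] [InnerProductSpace ℝ E]
  [NormedAddCommGroup F] [InnerProductSpace ℝ F]
  (A : E →ₗ[ℝ] F) (Aadj : F →ₗ[ℝ] E) (B : F →ₗ[ℝ] F) (Z : E) (b : F)

/-- `fobj` on arbitrary real inner product spaces; for the trace inner product on matrices the two
agree definitionally. -/
def dualObj (W : E) (ξ : F) : ℝ := 1 / 2 * ‖W + Aadj ξ + Z‖ ^ 2 - ⟪b, ξ⟫

/-- The minimizer of `f(W, ·)` when `B` inverts `AA*`. -/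
def optXi (W : E) : F := B (b - A Z - A W)

def reducedDualObj (W : E) : ℝ := dualObj Aadj Z b W (optXi A B Z b W)

variable {A Aadj B}

theorem A_residual_optXi (hB1 : ∀ ξ, A (Aadj (B ξ)) = ξ) (W : E) :
    A (W + Aadj (optXi A B Z b W) + Z) = b := by
  simp only [optXi, map_add, hB1]
  abel

theorem dualObj_add_add (hadj : ∀ X ξ, ⟪A X, ξ⟫ = ⟪X, Aadj ξ⟫) (W D : E) (ξ δ : F) :
    dualObj Aadj Z b (W + D) (ξ + δ) = dualObj Aadj Z b W ξ + ⟪W + Aadj ξ + Z, D⟫ +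
      ⟪A (W + Aadj ξ + Z) - b, δ⟫ + ‖D + Aadj δ‖ ^ 2 / 2 := by
  have hsplit : W + D + Aadj (ξ + δ) + Z = (W + Aadj ξ + Z) + (D + Aadj δ) := by
    rw [map_add]; abel
  simp only [dualObj, hsplit, norm_add_sq_real, inner_add_right, inner_sub_left, hadj]
  ring

/-- At `ξ = optXi W` the `ξ`-derivative of `f` vanishes, since `A` maps the residual to `b`. -/
theorem dualObj_optXi_add_add (hadj : ∀ X ξ, ⟪A X, ξ⟫ = ⟪X, Aadj ξ⟫)
    (hB1 : ∀ ξ, A (Aadj (B ξ)) = ξ) (W D : E) (δ : F) :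
    dualObj Aadj Z b (W + D) (optXi A B Z b W + δ) = reducedDualObj A Aadj B Z b W +
      ⟪W + Aadj (optXi A B Z b W) + Z, D⟫ + ‖D + Aadj δ‖ ^ 2 / 2 := by
  rw [dualObj_add_add Z b hadj, A_residual_optXi Z b hB1, sub_self, inner_zero_left, add_zero,
    reducedDualObj]

theorem reducedDualObj_le (hadj : ∀ X ξ, ⟪A X, ξ⟫ = ⟪X, Aadj ξ⟫)
    (hB1 : ∀ ξ, A (Aadj (B ξ)) = ξ) (W : E) (ξ : F) :
    reducedDualObj A Aadj B Z b W ≤ dualObj Aadj Z b W ξ := by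
  have h := dualObj_optXi_add_add Z b hadj hB1 W 0 (ξ - optXi A B Z b W)
  rw [add_zero, add_sub_cancel, inner_zero_right, add_zero, zero_add] at h
  rw [h]
  linarith [sq_nonneg ‖Aadj (ξ - optXi A B Z b W)‖]

theorem norm_sub_adj_le (hadj : ∀ X ξ, ⟪A X, ξ⟫ = ⟪X, Aadj ξ⟫)
    (hB1 : ∀ ξ, A (Aadj (B ξ)) = ξ) (D : E) : ‖D - Aadj (B (A D))‖ ≤ ‖D‖ := by
  have horth : ⟪D - Aadj (B (A D)), Aadj (B (A D))⟫ = 0 := by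
    rw [← hadj, map_sub, hB1, sub_self, inner_zero_left]
  have h := norm_add_sq_eq_norm_sq_add_norm_sq_real horth
  rw [sub_add_cancel] at h
  exact (sq_le_sq₀ (norm_nonneg _) (norm_nonneg _)).1 (by nlinarith [sq_nonneg ‖Aadj (B (A D))‖])

/-- The reduced objective is quadratic with gradient `W + A* optXi W + Z` and Hessian the
orthogonal projection onto `ker A`. -/
theorem reducedDualObj_add (hadj : ∀ X ξ, ⟪A X, ξ⟫ = ⟪X, Aadj ξ⟫)
    (hB1 : ∀ ξ, A (Aadj (B ξ)) = ξ) (W D : E) :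
    reducedDualObj A Aadj B Z b (W + D) = reducedDualObj A Aadj B Z b W +
      ⟪W + Aadj (optXi A B Z b W) + Z, D⟫ + ‖D - Aadj (B (A D))‖ ^ 2 / 2 := by
  have hξ : optXi A B Z b (W + D) = optXi A B Z b W + -B (A D) := by
    simp only [optXi, map_add, map_sub]; abel
  rw [reducedDualObj, hξ, dualObj_optXi_add_add Z b hadj hB1, map_neg, ← sub_eq_add_neg]

theorem reducedDualObj_three_point (hadj : ∀ X ξ, ⟪A X, ξ⟫ = ⟪X, Aadj ξ⟫)
    (hB1 : ∀ ξ, A (Aadj (B ξ)) = ξ) {x y z : E}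
    (hx : ⟪-Aadj (optXi A B Z b y) - Z - x, z - x⟫ ≤ 0) :
    reducedDualObj A Aadj B Z b x - reducedDualObj A Aadj B Z b z ≤
      ‖y - z‖ ^ 2 / 2 - ‖x - z‖ ^ 2 / 2 := by
  have hexp (w : E) := reducedDualObj_add Z b hadj hB1 y (w - y)
  simp only [add_sub_cancel] at hexp
  refine three_point_of_projected_gradient_step (g := y + Aadj (optXi A B Z b y) + Z) ?_ ?_ ?_
  · convert hx using 2; abel
  · rw [hexp x]
    gcongr
    exact norm_sub_adj_le hadj hB1 _
  · rw [hexp z]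
    linarith [sq_nonneg ‖z - y - Aadj (B (A (z - y)))‖]

end DualObjective

theorem mInner_eq_sum {n : ℕ} (X Y : Matrix (Fin n) (Fin n) ℝ) :
    mInner X Y = ∑ i, ∑ j, X j i * Y j i := by
  simp only [mInner, trace, Matrix.diag, mul_apply, transpose_apply]

@[reducible]
def traceInnerCore (n : ℕ) : InnerProductSpace.Core ℝ (Matrix (Fin n) (Fin n) ℝ) where
  inner := mInner
  conj_inner_symm X Y := by simp only [conj_trivial, mInner_eq_sum, mul_comm]
  re_inner_nonneg X := by
    simp only [RCLike.re_to_real, mInner_eq_sum]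
    exact sum_nonneg fun _ _ ↦ sum_nonneg fun _ _ ↦ mul_self_nonneg _
  add_left X Y W := by simp only [mInner_eq_sum, Matrix.add_apply, add_mul, sum_add_distrib]
  smul_left X Y r := by
    simp only [mInner_eq_sum, Matrix.smul_apply, smul_eq_mul, mul_assoc, mul_sum, conj_trivial]
  definite X hX := by
    rw [mInner_eq_sum, sum_eq_zero_iff_of_nonneg
      (fun _ _ ↦ sum_nonneg fun _ _ ↦ mul_self_nonneg _)] at hX
    ext i j
    have hi := (sum_eq_zero_iff_of_nonneg (fun _ _ ↦ mul_self_nonneg _)).1 (hX j (mem_univ _)) i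
    exact mul_self_eq_zero.1 (hi (mem_univ _))

@[reducible]
def traceNormedAddCommGroup (n : ℕ) : NormedAddCommGroup (Matrix (Fin n) (Fin n) ℝ) :=
  (traceInnerCore n).toNormedAddCommGroup

attribute [local instance] traceNormedAddCommGroup

@[reducible]
def traceInnerProductSpace (n : ℕ) : InnerProductSpace ℝ (Matrix (Fin n) (Fin n) ℝ) :=
  .ofCore (traceInnerCore n).toCore

attribute [local instance] traceInnerProductSpace

theorem norm_eq_mNorm {n : ℕ} (X : Matrix (Fin n) (Fin n) ℝ) : ‖X‖ = mNorm X := rfl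

theorem convex_posSemidef {ι : Type*} [Fintype ι] :
    Convex ℝ {X : Matrix ι ι ℝ | X.PosSemidef} :=
  fun _ hX _ hY _ _ ha hb _ ↦ (PosSemidef.smul hX ha).add (PosSemidef.smul hY hb)

theorem IsProjPSD.inner_sub_le_zero {n : ℕ} {Y P : Matrix (Fin n) (Fin n) ℝ} (h : IsProjPSD Y P)
    {X : Matrix (Fin n) (Fin n) ℝ} (hX : X.PosSemidef) : ⟪Y - P, X - P⟫ ≤ 0 :=
  real_inner_le_zero_of_forall_norm_sub_le (K := {M : Matrix (Fin n) (Fin n) ℝ | M.PosSemidef})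
    convex_posSemidef h.1
    (fun W hW ↦ by simpa only [norm_sub_rev Y, norm_eq_mNorm] using h.2 W hW) X hX

theorem sGS_APG_convergence_general {n m : ℕ}
    (A : Matrix (Fin n) (Fin n) ℝ →ₗ[ℝ] Vec m)
    (Aadj : Vec m →ₗ[ℝ] Matrix (Fin n) (Fin n) ℝ)
    (hadj : ∀ (X : Matrix (Fin n) (Fin n) ℝ) (ξ : Vec m), ⟪A X, ξ⟫ = mInner X (Aadj ξ))
    -- `B` is the inverse of `A A*`
    (B : Vec m →ₗ[ℝ] Vec m)
    (hB1 : ∀ ξ : Vec m, A (Aadj (B ξ)) = ξ)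
    -- the projection onto the PSD cone
    (proj : Matrix (Fin n) (Fin n) ℝ → Matrix (Fin n) (Fin n) ℝ)
    (hproj : ∀ Y : Matrix (Fin n) (Fin n) ℝ, IsProjPSD Y (proj Y))
    (Z : Matrix (Fin n) (Fin n) ℝ) (b : Vec m)
    -- a minimizer of f over S^n_+ × ℝ^m
    (Wstar : Matrix (Fin n) (Fin n) ℝ) (ξstar : Vec m)
    (hWstar : Wstar.PosSemidef)
    (hmin : ∀ (W' : Matrix (Fin n) (Fin n) ℝ) (ξ' : Vec m), W'.PosSemidef →
      fobj Aadj Z b Wstar ξstar ≤ fobj Aadj Z b W' ξ')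
    -- the sGS-APG iterates
    (W Wt : ℕ → Matrix (Fin n) (Fin n) ℝ) (ξt ξ : ℕ → Vec m) (t : ℕ → ℝ)
    (hWt1 : Wt 1 = W 0) (ht1 : t 1 = 1)
    (hξt : ∀ k, 1 ≤ k → ξt k = B (b - A Z - A (Wt k)))
    (hWk : ∀ k, 1 ≤ k → W k = proj (-(Aadj (ξt k)) - Z))
    (hξ : ∀ k, 1 ≤ k → ξ k = B (b - A Z - A (W k)))
    (ht : ∀ k, 1 ≤ k → t (k + 1) = (1 + Real.sqrt (1 + 4 * t k ^ 2)) / 2)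
    (hWtrec : ∀ k, 1 ≤ k →
      Wt (k + 1) = W k + ((t k - 1) / t (k + 1)) • (W k - W (k - 1))) :
    ∃ c : ℝ, 0 ≤ c ∧ ∀ k, 1 ≤ k →
      0 ≤ fobj Aadj Z b (W k) (ξ k) - fobj Aadj Z b Wstar ξstar ∧
      fobj Aadj Z b (W k) (ξ k) - fobj Aadj Z b Wstar ξstar ≤ c / ((k : ℝ) + 1) ^ 2 := by
  set h := reducedDualObj A Aadj B Z b
  have hWC : ∀ k, 1 ≤ k → (W k).PosSemidef := fun k hk ↦ hWk k hk ▸ (hproj _).1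
  have hstep : ∀ k, 1 ≤ k → ∀ z ∈ {M : Matrix (Fin n) (Fin n) ℝ | M.PosSemidef},
      h (W k) - h z ≤ ‖Wt k - z‖ ^ 2 / 2 - ‖W k - z‖ ^ 2 / 2 := fun k hk z hz ↦
    reducedDualObj_three_point Z b hadj hB1
      (hWk k hk ▸ hξt k hk ▸ (hproj _).inner_sub_le_zero hz)
  have hhmin : IsMinOn h {M | M.PosSemidef} Wstar := fun W' hW' ↦
    (reducedDualObj_le Z b hadj hB1 Wstar ξstar).trans (hmin W' (optXi A B Z b W') hW')
  refine ⟨2 * ‖W 0 - Wstar‖ ^ 2, by positivity, fun k hk ↦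
    ⟨sub_nonneg.2 (hmin _ _ (hWC k hk)), ?_⟩⟩
  calc fobj Aadj Z b (W k) (ξ k) - fobj Aadj Z b Wstar ξstar ≤ h (W k) - h Wstar := by
        rw [hξ k hk]
        exact sub_le_sub_left (reducedDualObj_le Z b hadj hB1 Wstar ξstar) _
    _ ≤ 2 * ‖W 0 - Wstar‖ ^ 2 / ((k : ℝ) + 1) ^ 2 :=
        fista_rate (C := {M | M.PosSemidef}) hWstar hhmin hWC hstep hWt1 ht1 ht hWtrec k hk

/-- `O(1/k²)` convergence of the sGS-based accelerated proximal gradient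
method (Theorem `converg-thm-sgs-apg` in the paper). -/
theorem sGS_APG_convergence {n m : ℕ}
    (A : Matrix (Fin n) (Fin n) ℝ →ₗ[ℝ] Vec m)
    (Aadj : Vec m →ₗ[ℝ] Matrix (Fin n) (Fin n) ℝ)
    (hadj : ∀ (X : Matrix (Fin n) (Fin n) ℝ) (ξ : Vec m), ⟪A X, ξ⟫ = mInner X (Aadj ξ))
    (hAadjSymm : ∀ ξ : Vec m, (Aadj ξ).IsSymm)
    (hsurj : Function.Surjective ⇑A)
    -- `B` is the inverse of `A A*`
    (B : Vec m →ₗ[ℝ] Vec m)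
    (hB1 : ∀ ξ : Vec m, A (Aadj (B ξ)) = ξ)
    (hB2 : ∀ ξ : Vec m, B (A (Aadj ξ)) = ξ)
    -- the projection onto the PSD cone
    (proj : Matrix (Fin n) (Fin n) ℝ → Matrix (Fin n) (Fin n) ℝ)
    (hproj : ∀ Y : Matrix (Fin n) (Fin n) ℝ, IsProjPSD Y (proj Y))
    (Z : Matrix (Fin n) (Fin n) ℝ) (hZ : Z.IsSymm) (b : Vec m)
    -- a minimizer of f over S^n_+ × ℝ^m
    (Wstar : Matrix (Fin n) (Fin n) ℝ) (ξstar : Vec m)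
    (hWstar : Wstar.PosSemidef)
    (hmin : ∀ (W' : Matrix (Fin n) (Fin n) ℝ) (ξ' : Vec m), W'.PosSemidef →
      fobj Aadj Z b Wstar ξstar ≤ fobj Aadj Z b W' ξ')
    -- the sGS-APG iterates
    (W Wt : ℕ → Matrix (Fin n) (Fin n) ℝ) (ξt ξ : ℕ → Vec m) (t : ℕ → ℝ)
    (hW0 : (W 0).PosSemidef)
    (hWt1 : Wt 1 = W 0) (ht1 : t 1 = 1)
    (hξt : ∀ k, 1 ≤ k → ξt k = B (b - A Z - A (Wt k)))
    (hWk : ∀ k, 1 ≤ k → W k = proj (-(Aadj (ξt k)) - Z))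
    (hξ : ∀ k, 1 ≤ k → ξ k = B (b - A Z - A (W k)))
    (ht : ∀ k, 1 ≤ k → t (k + 1) = (1 + Real.sqrt (1 + 4 * t k ^ 2)) / 2)
    (hWtrec : ∀ k, 1 ≤ k →
      Wt (k + 1) = W k + ((t k - 1) / t (k + 1)) • (W k - W (k - 1))) :
    ∃ c : ℝ, 0 ≤ c ∧ ∀ k, 1 ≤ k →
      0 ≤ fobj Aadj Z b (W k) (ξ k) - fobj Aadj Z b Wstar ξstar ∧
      fobj Aadj Z b (W k) (ξ k) - fobj Aadj Z b Wstar ξstar ≤ c / ((k : ℝ) + 1) ^ 2 :=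
  sGS_APG_convergence_general A Aadj hadj B hB1 proj hproj Z b Wstar ξstar hWstar hmin W Wt ξt ξ t
    hWt1 ht1 hξt hWk hξ ht hWtrec
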